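/- arXiv:1205.5779 — 2 statements merged into one kernel-verified Lean document; each statement's English description precedes it below -/
import Mathlib

section
/- For all integers s, t ≥ 2 and every quartet q ∈ Q_{s,t}, the set Q_{s,t} \ {q} is compatible: there exists an unrooted phylogenetic tree on L_{s,t} displaying every quartet of Q_{s,t} other than q. -/
open SimpleGraph

universe u

/-- A quartet `xy|zw`: an unordered pair of unordered pairs of labels. -/
def quartet {L : Type u} (x y z w : L) : Sym2 (Sym2 L) := s(s(x, y), s(z, w))

/-- `q` is a genuine quartet: four pairwise distinct labels. -/
def IsQuartet {L : Type u} (q : Sym2 (Sym2 L)) : Prop :=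
  ∃ x y z w : L, x ≠ y ∧ x ≠ z ∧ x ≠ w ∧ y ≠ z ∧ y ≠ w ∧ z ≠ w ∧ q = quartet x y z w

/-- The label set `L(Q)` of a set of quartets. -/
def qLabelSet {L : Type u} (Q : Set (Sym2 (Sym2 L))) : Set L :=
  {x | ∃ q ∈ Q, ∃ p, p ∈ q ∧ x ∈ p}

/-- An unrooted phylogenetic tree whose leaves are in bijection with the label set `S`:
a finite tree with no degree-2 vertex, whose degree-1 vertices are exactly the labeled ones. -/
structure UTree (L : Type u) (S : Set L) where
  V : Type
  fV : Fintype V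
  G : SimpleGraph V
  isTree : G.IsTree
  label : S → V
  labelInj : Function.Injective label
  leafIff : ∀ v : V, (∃ l : S, label l = v) ↔ (G.neighborSet v).ncard = 1
  noDeg2 : ∀ v : V, (G.neighborSet v).ncard ≠ 2

/-- `T` displays the quartet `xy|zw`: the path between the leaves labeled `x` and `y`
is vertex-disjoint from the path between the leaves labeled `z` and `w`. -/
def UTree.displays4 {L : Type u} {S : Set L} (T : UTree L S) (x y z w : L) : Prop :=
  ∃ (hx : x ∈ S) (hy : y ∈ S) (hz : z ∈ S) (hw : w ∈ S)
    (p : T.G.Walk (T.label ⟨x, hx⟩) (T.label ⟨y, hy⟩))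
    (p' : T.G.Walk (T.label ⟨z, hz⟩) (T.label ⟨w, hw⟩)),
    p.IsPath ∧ p'.IsPath ∧ ∀ v, v ∈ p.support → v ∉ p'.support

def UTree.displays {L : Type u} {S : Set L} (T : UTree L S) (q : Sym2 (Sym2 L)) : Prop :=
  ∀ x y z w : L, q = quartet x y z w → T.displays4 x y z w

/-- A set of quartets is compatible over label set `S` if a single tree displays all of them. -/
def QCompat {L : Type u} (S : Set L) (Q : Set (Sym2 (Sym2 L))) : Prop :=
  ∃ T : UTree L S, ∀ q ∈ Q, T.displays q

/-- `χ` is a partition of the label set `S` (a character on `S`). -/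
def IsPartitionOn {L : Type u} (S : Set L) (χ : Set (Set L)) : Prop :=
  (∀ B ∈ χ, B.Nonempty ∧ B ⊆ S) ∧ ∀ x ∈ S, ∃! B, B ∈ χ ∧ x ∈ B

/-- The vertex set of the minimal subtree of `T` spanning the leaves labeled by `B`. -/
def UTree.span {L : Type u} {S : Set L} (T : UTree L S) (B : Set L) : Set T.V :=
  {v | ∃ (x y : L) (hx : x ∈ S) (hy : y ∈ S), x ∈ B ∧ y ∈ B ∧
    ∃ p : T.G.Walk (T.label ⟨x, hx⟩) (T.label ⟨y, hy⟩), p.IsPath ∧ v ∈ p.support}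

/-- The character `χ` is convex on `T`: spanning subtrees of distinct blocks are disjoint. -/
def UTree.convexOn {L : Type u} {S : Set L} (T : UTree L S) (χ : Set (Set L)) : Prop :=
  ∀ B ∈ χ, ∀ B' ∈ χ, B ≠ B' → ∀ v ∈ T.span B, v ∉ T.span B'

/-- A set of characters is compatible over `S` if a single tree makes all of them convex. -/
def CCompat {L : Type u} (S : Set L) (C : Set (Set (Set L))) : Prop :=
  ∃ T : UTree L S, ∀ χ ∈ C, T.convexOn χ

/-- The character `χ_q` corresponding to the quartet `xy|zw`:
blocks `{x,y}`, `{z,w}` and a singleton for every other label of `S`. -/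
def chiQ {L : Type u} (S : Set L) (x y z w : L) : Set (Set L) :=
  {{x, y}, {z, w}} ∪ {B | ∃ l ∈ S, l ≠ x ∧ l ≠ y ∧ l ≠ z ∧ l ≠ w ∧ B = {l}}

/-- The set of characters corresponding to a set of quartets. -/
def CQ {L : Type u} (S : Set L) (Q : Set (Sym2 (Sym2 L))) : Set (Set (Set L)) :=
  {χ | ∃ q ∈ Q, ∃ x y z w : L, q = quartet x y z w ∧ χ = chiQ S x y z w}

/-- A rooted phylogenetic tree on label set `S`. -/
structure RTree (L : Type u) (S : Set L) where
  V : Type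
  fV : Fintype V
  G : SimpleGraph V
  isTree : G.IsTree
  root : V
  label : S → V
  labelInj : Function.Injective label
  leafIff : ∀ v : V, (∃ l : S, label l = v) ↔ ((G.neighborSet v).ncard = 1 ∧ v ≠ root)
  noDeg2 : ∀ v : V, v ≠ root → (G.neighborSet v).ncard ≠ 2

/-- `u` is an ancestor of `v`: `u` lies on the path from the root to `v`. -/
def RTree.anc {L : Type u} {S : Set L} (T : RTree L S) (u v : T.V) : Prop :=
  ∃ p : T.G.Walk T.root v, p.IsPath ∧ u ∈ p.support

/-- `m` is the most recent common ancestor of the set `A` of vertices. -/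
def RTree.isMRCA {L : Type u} {S : Set L} (T : RTree L S) (A : Set T.V) (m : T.V) : Prop :=
  (∀ v ∈ A, T.anc m v) ∧ ∀ w, (∀ v ∈ A, T.anc w v) → T.anc w m

/-- `T` displays the rooted triplet `ab|c`: the MRCA of `{a,b}` is a proper
descendant of the MRCA of `{a,b,c}`. -/
def RTree.displays3 {L : Type u} {S : Set L} (T : RTree L S) (a b c : L) : Prop :=
  ∃ (ha : a ∈ S) (hb : b ∈ S) (hc : c ∈ S) (m M : T.V),
    T.isMRCA {T.label ⟨a, ha⟩, T.label ⟨b, hb⟩} m ∧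
    T.isMRCA {T.label ⟨a, ha⟩, T.label ⟨b, hb⟩, T.label ⟨c, hc⟩} M ∧
    T.anc M m ∧ M ≠ m

/-- A rooted triplet `ab|c` is encoded as the pair `(s(a,b), c)`. -/
def RTree.displays {L : Type u} {S : Set L} (T : RTree L S) (t : Sym2 L × L) : Prop :=
  ∀ a b c : L, t = (s(a, b), c) → T.displays3 a b c

def IsTriplet {L : Type u} (t : Sym2 L × L) : Prop :=
  ∃ a b c : L, a ≠ b ∧ a ≠ c ∧ b ≠ c ∧ t = (s(a, b), c)

/-- The label set `L(R)` of a set of rooted triplets. -/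
def tLabelSet {L : Type u} (R : Set (Sym2 L × L)) : Set L :=
  {x | ∃ t ∈ R, x ∈ t.1 ∨ x = t.2}

/-- A set of rooted triplets is compatible if one rooted tree displays all of them. -/
def RCompat {L : Type u} (S : Set L) (R : Set (Sym2 L × L)) : Prop :=
  ∃ T : RTree L S, ∀ t ∈ R, T.displays t

/-- The graph `[R,S]`: vertices `S`, with an edge `{a,b}` whenever `ab|c ∈ R` for some `c ∈ S`. -/
def tripGraph {L : Type u} (R : Set (Sym2 L × L)) (S : Set L) : SimpleGraph L where
  Adj x y := x ≠ y ∧ x ∈ S ∧ y ∈ S ∧ ∃ c ∈ S, (s(x, y), c) ∈ R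
  symm := by
    constructor
    rintro x y ⟨hxy, hx, hy, c, hc, hR⟩
    exact ⟨hxy.symm, hy, hx, c, hc, by rwa [Sym2.eq_swap]⟩
  loopless := by constructor; rintro x ⟨hx, -⟩; exact hx rfl

/-- The label set `L_{s,t} = {a_1,…,a_s, b_1,…,b_t}`, with `a_i = inl i` and `b_j = inr j`. -/
def Lst (s t : ℕ) : Set (ℕ ⊕ ℕ) := (Sum.inl '' Set.Icc 1 s) ∪ (Sum.inr '' Set.Icc 1 t)

/-- The quartet set `Q_{s,t} = {a_1b_1|a_sb_t} ∪ {a_i a_{i+1} | b_j b_{j+1} : 1 ≤ i < s, 1 ≤ j < t}`. -/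
def Qst (s t : ℕ) : Finset (Sym2 (Sym2 (ℕ ⊕ ℕ))) :=
  insert (quartet (Sum.inl 1) (Sum.inr 1) (Sum.inl s) (Sum.inr t))
    ((Finset.Ico 1 s ×ˢ Finset.Ico 1 t).image
      (fun p => quartet (Sum.inl p.1) (Sum.inl (p.1 + 1)) (Sum.inr p.2) (Sum.inr (p.2 + 1))))

/-! Every tree used is a split tree: a central edge `c₀ c₁`, and at each end `c_σ` two blocks of
leaves, each hanging from a hub of its own, or directly from `c_σ` when the block is a single leaf.
Such a tree displays two pairs that lie on opposite sides of the central edge, and a pair inside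
one block against any pair avoiding that block.

To drop `a₁b₁|a_sb_t`, put the `a`'s on one side and the `b`'s on the other. To drop
`a_i a_{i+1}|b_j b_{j+1}`, take the blocks `{a_k : k ≤ i}`, `{b_l : l ≤ j}` on one side and
`{a_k : k > i}`, `{b_l : l > j}` on the other: the central edge separates `a₁b₁` from `a_sb_t`, and
every other quartet `a_k a_{k+1}|b_l b_{l+1}` has `k ≠ i` or `l ≠ j`, so one of its pairs lies in a
block that the other pair avoids. -/

namespace SimpleGraph

variable {V : Type*} (p : V → V)

def parentGraph : SimpleGraph V := fromRel fun v w => p v = w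

variable {p} {r : V} {h : V → ℕ}

theorem parentGraph_adj {v w : V} : (parentGraph p).Adj v w ↔ v ≠ w ∧ (p v = w ∨ p w = v) :=
  Iff.rfl

theorem parentGraph_adj_parent {v : V} (hv : p v ≠ v) : (parentGraph p).Adj v (p v) :=
  ⟨hv.symm, Or.inl rfl⟩

section Height

variable (hr : p r = r) (hh : ∀ v, v ≠ r → h (p v) < h v)
include hr hh

theorem parentGraph_eq_parent_of_adj_of_height_lt {v w : V} (hvw : (parentGraph p).Adj v w)
    (hlt : h w < h v) : p v = w := by
  obtain ⟨hne, hpar | hpar⟩ := hvw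
  · exact hpar
  · have hw : w ≠ r := by rintro rfl; exact hne (hpar ▸ hr)
    exact absurd (hpar ▸ hh w hw) (by omega)

theorem parentGraph_height_ne_of_adj {v w : V} (hvw : (parentGraph p).Adj v w) : h v ≠ h w := by
  obtain ⟨hne, hpar | hpar⟩ := hvw
  · have hv : v ≠ r := by rintro rfl; exact hne (hpar ▸ hr).symm
    exact (hpar ▸ hh v hv).ne'
  · have hw : w ≠ r := by rintro rfl; exact hne (hpar ▸ hr)
    exact (hpar ▸ hh w hw).ne

omit hr in
theorem parentGraph_reachable_root (v : V) : (parentGraph p).Reachable v r := by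
  induction hn : h v using Nat.strong_induction_on generalizing v with
  | _ n ih =>
    by_cases hv : v = r
    · exact hv ▸ .refl _
    · have hlt := hh v hv
      have hpv : p v ≠ v := fun e => by rw [e] at hlt; omega
      exact (parentGraph_adj_parent hpv).reachable.trans (ih _ (hn ▸ hlt) _ rfl)

/-- On a cycle, both neighbours of a vertex of maximal height would have to be its parent. -/
theorem parentGraph_isAcyclic : (parentGraph p).IsAcyclic := by
  classical
  intro v c hc
  obtain ⟨m, hm, hmax⟩ := c.support.toFinset.exists_max_image h ⟨v, by simp⟩
  rw [List.mem_toFinset] at hm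
  set c' := c.rotate m hm
  have hc' : c'.IsCycle := hc.rotate hm
  have hle : ∀ x ∈ c'.support, h x ≤ h m := fun x hx =>
    hmax x (List.mem_toFinset.2 ((c.mem_support_rotate_iff m hm).1 hx))
  have parent_of_mem {x : V} (hx : x ∈ c'.support) (hadj : (parentGraph p).Adj m x) : p m = x :=
    parentGraph_eq_parent_of_adj_of_height_lt hr hh hadj
      (lt_of_le_of_ne (hle x hx) (parentGraph_height_ne_of_adj hr hh hadj).symm)
  exact hc'.snd_ne_penultimate <|
    (parent_of_mem (c'.getVert_mem_support 1) (c'.adj_snd hc'.not_nil)).symm.trans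
      (parent_of_mem (c'.getVert_mem_support _) (c'.adj_penultimate hc'.not_nil).symm)

theorem parentGraph_isTree : (parentGraph p).IsTree :=
  ⟨(connected_iff _).2 ⟨fun v w => (parentGraph_reachable_root hh v).trans
    (parentGraph_reachable_root hh w).symm, ⟨r⟩⟩, parentGraph_isAcyclic hr hh⟩

end Height

theorem parentGraph_neighborSet_eq_singleton {v : V} (hv : p v ≠ v) (hleaf : ∀ w, p w ≠ v) :
    (parentGraph p).neighborSet v = {p v} := by
  ext w
  simp only [mem_neighborSet, parentGraph_adj, Set.mem_singleton_iff]
  refine ⟨fun ⟨_, hw⟩ => hw.resolve_right (hleaf w) |>.symm, ?_⟩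
  rintro rfl
  exact ⟨hv.symm, Or.inl rfl⟩

end SimpleGraph

theorem SimpleGraph.three_le_ncard_neighborSet {V : Type*} [Finite V] {G : SimpleGraph V}
    {v a b c : V} (ha : G.Adj v a) (hb : G.Adj v b) (hc : G.Adj v c)
    (hab : a ≠ b) (hac : a ≠ c) (hbc : b ≠ c) : 3 ≤ (G.neighborSet v).ncard := by
  have h3 : ({a, b, c} : Set V).ncard = 3 := Set.ncard_eq_three.2 ⟨a, b, c, hab, hac, hbc, rfl⟩
  rw [← h3]
  apply Set.ncard_le_ncard _ (Set.toFinite _)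
  rintro x (rfl | rfl | rfl) <;> assumption

theorem SimpleGraph.Reachable.exists_isPath_support_subset {V : Type*} {G : SimpleGraph V}
    {W : Set V} {a b : W} (hab : (G.induce W).Reachable a b) :
    ∃ q : G.Walk a b, q.IsPath ∧ ∀ v ∈ q.support, v ∈ W := by
  classical
  obtain ⟨q⟩ := hab
  let q' := q.map (Embedding.induce W).toHom
  refine ⟨q'.bypass, q'.bypass_isPath, fun v hv => ?_⟩
  have hv' : v ∈ q'.support := q'.support_bypass_subset_support hv
  rw [Walk.support_map, List.mem_map] at hv'
  obtain ⟨x, -, rfl⟩ := hv'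
  exact x.2

theorem SimpleGraph.parentGraph_reachable_induce_of_parent_eq {V : Type*} {p : V → V}
    {W : Set V} {v w : V} (hv : v ∈ W) (hw : w ∈ W) (hvw : p v = w) :
    ((parentGraph p).induce W).Reachable ⟨v, hv⟩ ⟨w, hw⟩ := by
  subst hvw
  by_cases h : p v = v
  · exact (Subtype.ext h.symm : (⟨v, hv⟩ : W) = ⟨p v, hw⟩) ▸ .rfl
  · exact Adj.reachable (G := (parentGraph p).induce W) (parentGraph_adj_parent h)

namespace UTree

variable {L : Type u} {S : Set L} {T : UTree L S} {x y z w : L}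

theorem displays4_of_reachable {W W' : Set T.V} (hWW' : Disjoint W W')
    {hx : x ∈ S} {hy : y ∈ S} {hz : z ∈ S} {hw : w ∈ S} {hxW : T.label ⟨x, hx⟩ ∈ W}
    {hyW : T.label ⟨y, hy⟩ ∈ W} {hzW : T.label ⟨z, hz⟩ ∈ W'} {hwW : T.label ⟨w, hw⟩ ∈ W'}
    (hxy : (T.G.induce W).Reachable ⟨_, hxW⟩ ⟨_, hyW⟩)
    (hzw : (T.G.induce W').Reachable ⟨_, hzW⟩ ⟨_, hwW⟩) : T.displays4 x y z w := by
  obtain ⟨q, hq, hqW⟩ := hxy.exists_isPath_support_subset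
  obtain ⟨q', hq', hqW'⟩ := hzw.exists_isPath_support_subset
  exact ⟨hx, hy, hz, hw, q, q', hq, hq', fun v hv hv' => hWW'.ne_of_mem (hqW v hv) (hqW' v hv') rfl⟩

theorem displays4_swap_left (h : T.displays4 x y z w) : T.displays4 y x z w := by
  obtain ⟨hx, hy, hz, hw, p, p', hp, hp', hd⟩ := h
  exact ⟨hy, hx, hz, hw, p.reverse, p', hp.reverse, hp', fun v hv => hd v (by simpa using hv)⟩

theorem displays4_comm (h : T.displays4 x y z w) : T.displays4 z w x y := by
  obtain ⟨hx, hy, hz, hw, p, p', hp, hp', hd⟩ := h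
  exact ⟨hz, hw, hx, hy, p', p, hp', hp, fun v hv hv' => hd v hv' hv⟩

theorem displays4_swap_right (h : T.displays4 x y z w) : T.displays4 x y w z :=
  displays4_comm (displays4_swap_left (displays4_comm h))

theorem displays_quartet (h : T.displays4 x y z w) : T.displays (quartet x y z w) := by
  intro x' y' z' w' heq
  simp only [quartet, Sym2.eq_iff] at heq
  rcases heq with ⟨⟨rfl, rfl⟩ | ⟨rfl, rfl⟩, ⟨rfl, rfl⟩ | ⟨rfl, rfl⟩⟩ |
    ⟨⟨rfl, rfl⟩ | ⟨rfl, rfl⟩, ⟨rfl, rfl⟩ | ⟨rfl, rfl⟩⟩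
  · exact h
  · exact displays4_swap_right h
  · exact displays4_swap_left h
  · exact displays4_swap_left (displays4_swap_right h)
  · exact displays4_comm h
  · exact displays4_swap_left (displays4_comm h)
  · exact displays4_swap_right (displays4_comm h)
  · exact displays4_swap_left (displays4_swap_right (displays4_comm h))

end UTree

namespace SplitTree

variable {L : Type} (S : Set L) (blk : L → Bool × Bool)

def block (U : Bool × Bool) : Set L := {x ∈ S | blk x = U}

/-- Leaves, a hub for every block with at least two labels, and the two centres. -/
abbrev Vertex : Type := S ⊕ {U : Bool × Bool // (block S blk U).Nontrivial} ⊕ Bool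

variable {S blk}

def hub (U : {U : Bool × Bool // (block S blk U).Nontrivial}) : Vertex S blk := .inr (.inl U)

variable (S blk)

def centre (σ : Bool) : Vertex S blk := .inr (.inr σ)

open Classical in
/-- A block with a single label hangs directly from its centre: a hub would have degree two. -/
noncomputable def attach (U : Bool × Bool) : Vertex S blk :=
  if hU : (block S blk U).Nontrivial then hub ⟨U, hU⟩ else centre S blk U.1

noncomputable def parent : Vertex S blk → Vertex S blk
  | .inl x => attach S blk (blk x)
  | .inr (.inl U) => centre S blk U.1.1
  | .inr (.inr _) => centre S blk false

def height : Vertex S blk → ℕ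
  | .inl _ => 3
  | .inr (.inl _) => 2
  | .inr (.inr σ) => σ.toNat

def side : Vertex S blk → Bool
  | .inl x => (blk x).1
  | .inr (.inl U) => U.1.1
  | .inr (.inr σ) => σ

def blockOf : Vertex S blk → Option (Bool × Bool)
  | .inl x => some (blk x)
  | .inr (.inl U) => some U.1
  | .inr (.inr _) => none

variable {S blk}

theorem attach_of_nontrivial {U : Bool × Bool} (hU : (block S blk U).Nontrivial) :
    attach S blk U = hub ⟨U, hU⟩ :=
  dif_pos hU

theorem attach_of_not_nontrivial {U : Bool × Bool} (hU : ¬(block S blk U).Nontrivial) :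
    attach S blk U = centre S blk U.1 :=
  dif_neg hU

theorem side_attach (U : Bool × Bool) : side S blk (attach S blk U) = U.1 := by
  unfold attach; split_ifs <;> rfl

theorem blockOf_attach (U : Bool × Bool) :
    blockOf S blk (attach S blk U) = some U ∨ blockOf S blk (attach S blk U) = none := by
  unfold attach; split_ifs <;> simp [blockOf, hub, centre]

theorem height_attach_le (U : Bool × Bool) : height S blk (attach S blk U) ≤ 2 := by
  unfold attach; split_ifs
  · exact le_rfl
  · exact (Bool.toNat_le _).trans one_le_two

theorem height_parent_lt (v : Vertex S blk) (hv : v ≠ centre S blk false) :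
    height S blk (parent S blk v) < height S blk v := by
  rcases v with x | U | σ
  · exact Nat.lt_succ_of_le (height_attach_le _)
  · exact Nat.lt_succ_of_le (Bool.toNat_le _)
  · cases σ
    · exact absurd rfl hv
    · exact Nat.zero_lt_one

theorem attach_ne_inl (U : Bool × Bool) (x : S) : attach S blk U ≠ .inl x := by
  unfold attach; split_ifs <;> simp [hub, centre]

theorem ncard_neighborSet_leaf (x : S) :
    ((parentGraph (parent S blk)).neighborSet (.inl x)).ncard = 1 := by
  rw [parentGraph_neighborSet_eq_singleton (attach_ne_inl _ x), Set.ncard_singleton]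
  rintro (y | U | σ)
  · exact attach_ne_inl _ x
  all_goals simp [parent, centre]

theorem three_le_ncard_neighborSet_hub [Finite S]
    (U : {U : Bool × Bool // (block S blk U).Nontrivial}) :
    3 ≤ ((parentGraph (parent S blk)).neighborSet (hub U)).ncard := by
  obtain ⟨x, ⟨hxS, hx⟩, y, ⟨hyS, hy⟩, hxy⟩ := U.2
  have hpar {z : L} (hzS : z ∈ S) (hz : blk z = U.1) : parent S blk (.inl ⟨z, hzS⟩) = hub U := by
    simp only [parent, hz, attach_of_nontrivial U.2]
  refine three_le_ncard_neighborSet (a := .inl ⟨x, hxS⟩) (b := .inl ⟨y, hyS⟩)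
    (c := centre S blk U.1.1) ⟨Sum.inr_ne_inl, Or.inr (hpar hxS hx)⟩
    ⟨Sum.inr_ne_inl, Or.inr (hpar hyS hy)⟩ ⟨by simp [hub, centre], Or.inl rfl⟩ ?_ ?_ ?_
  · simpa using hxy
  all_goals simp [centre]

theorem exists_adj_centre {U : Bool × Bool} (hU : (block S blk U).Nonempty) :
    ∃ v, (parentGraph (parent S blk)).Adj (centre S blk U.1) v ∧ blockOf S blk v = some U := by
  obtain ⟨x, hxS, hx⟩ := hU
  by_cases hnt : (block S blk U).Nontrivial
  · exact ⟨hub ⟨U, hnt⟩, ⟨by simp [hub, centre], Or.inr rfl⟩, rfl⟩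
  · refine ⟨.inl ⟨x, hxS⟩, ⟨Sum.inr_ne_inl, Or.inr ?_⟩, by simp [blockOf, hx]⟩
    simp only [parent, hx, attach_of_not_nontrivial hnt]

theorem centre_adj_centre_not (σ : Bool) :
    (parentGraph (parent S blk)).Adj (centre S blk σ) (centre S blk !σ) := by
  cases σ
  · exact ⟨by simp [centre], Or.inr rfl⟩
  · exact ⟨by simp [centre], Or.inl rfl⟩

theorem three_le_ncard_neighborSet_centre [Finite S] (hne : ∀ U, (block S blk U).Nonempty)
    (σ : Bool) : 3 ≤ ((parentGraph (parent S blk)).neighborSet (centre S blk σ)).ncard := by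
  obtain ⟨a, ha, ha'⟩ := exists_adj_centre (hne (σ, false))
  obtain ⟨b, hb, hb'⟩ := exists_adj_centre (hne (σ, true))
  refine three_le_ncard_neighborSet ha hb (centre_adj_centre_not σ) ?_ ?_ ?_ <;>
    rintro rfl <;> simp_all [blockOf, centre]

theorem three_le_ncard_neighborSet_inr [Finite S] (hne : ∀ U, (block S blk U).Nonempty)
    (v : {U : Bool × Bool // (block S blk U).Nontrivial} ⊕ Bool) :
    3 ≤ ((parentGraph (parent S blk)).neighborSet (.inr v)).ncard := by
  rcases v with U | σ
  · exact three_le_ncard_neighborSet_hub U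
  · exact three_le_ncard_neighborSet_centre hne σ

/-- The split tree with central edge `centre false - centre true`, where block `(σ, κ)` hangs on
side `σ`. -/
noncomputable def _root_.splitTree (S : Set L) [Finite S] (blk : L → Bool × Bool)
    (hne : ∀ U, (block S blk U).Nonempty) : UTree L S where
  V := Vertex S blk
  fV := Fintype.ofFinite _
  G := parentGraph (parent S blk)
  isTree := parentGraph_isTree (r := centre S blk false) rfl height_parent_lt
  label := Sum.inl
  labelInj := Sum.inl_injective
  leafIff := by
    rintro (x | v)
    · exact iff_of_true ⟨x, rfl⟩ (ncard_neighborSet_leaf x)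
    · have := three_le_ncard_neighborSet_inr hne v
      exact iff_of_false (by simp) (by omega)
  noDeg2 := by
    rintro (x | v)
    · simp [ncard_neighborSet_leaf x]
    · have := three_le_ncard_neighborSet_inr hne v
      omega

theorem reachable_centre {W : Set (Vertex S blk)} {x : S} {σ : Bool} (hσ : (blk x).1 = σ)
    (hx : .inl x ∈ W) (ha : attach S blk (blk x) ∈ W) (hc : centre S blk σ ∈ W) :
    ((parentGraph (parent S blk)).induce W).Reachable ⟨.inl x, hx⟩ ⟨centre S blk σ, hc⟩ := by
  subst hσ
  by_cases hnt : (block S blk (blk x)).Nontrivial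
  · exact (parentGraph_reachable_induce_of_parent_eq hx ha rfl).trans
      (parentGraph_reachable_induce_of_parent_eq ha hc (by rw [attach_of_nontrivial hnt]; rfl))
  · exact parentGraph_reachable_induce_of_parent_eq hx hc (attach_of_not_nontrivial hnt)

theorem reachable_centre_centre {W : Set (Vertex S blk)} {σ τ : Bool} (hσ : centre S blk σ ∈ W)
    (hτ : centre S blk τ ∈ W) :
    ((parentGraph (parent S blk)).induce W).Reachable ⟨_, hσ⟩ ⟨_, hτ⟩ := by
  obtain rfl | rfl : τ = σ ∨ τ = !σ := by cases σ <;> cases τ <;> simp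
  · rfl
  · exact Adj.reachable (G := (parentGraph (parent S blk)).induce W) (centre_adj_centre_not σ)

theorem block_swap_nonempty (hne : ∀ U, (block S blk U).Nonempty) (U : Bool × Bool) :
    (block S (Prod.swap ∘ blk) U).Nonempty := by
  obtain ⟨x, hxS, hx⟩ := hne U.swap
  exact ⟨x, hxS, by simp [hx]⟩

variable [Finite S] (hne : ∀ U, (block S blk U).Nonempty)
include hne

theorem displays4_of_side {x y z w : L} (hx : x ∈ S) (hy : y ∈ S) (hz : z ∈ S) (hw : w ∈ S)
    (hxy : (blk x).1 = (blk y).1) (hzw : (blk z).1 = (blk w).1) (hxz : (blk x).1 ≠ (blk z).1) :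
    (splitTree S blk hne).displays4 x y z w := by
  have reach {u : L} (hu : u ∈ S) {σ : Bool} (huσ : (blk u).1 = σ) :=
    reachable_centre (W := side S blk ⁻¹' {σ}) (x := ⟨u, hu⟩) huσ huσ
      ((side_attach _).trans huσ) rfl
  exact UTree.displays4_of_reachable
    ((Set.disjoint_singleton.2 hxz).preimage (side S blk))
    ((reach hx rfl).trans (reach hy hxy.symm).symm)
    ((reach hz rfl).trans (reach hw hzw.symm).symm)

theorem displays4_of_block {x y z w : L} (hx : x ∈ S) (hy : y ∈ S) (hz : z ∈ S) (hw : w ∈ S)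
    {U : Bool × Bool} (hxU : blk x ≠ U) (hyU : blk y ≠ U) (hzU : blk z = U) (hwU : blk w = U) :
    (splitTree S blk hne).displays4 x y z w := by
  -- `W'` is block `U` together with its hub; `x` and `y` are joined through the centres, outside it.
  set W' := blockOf S blk ⁻¹' {some U}
  have reach {u : L} (hu : u ∈ S) (huU : blk u ≠ U) :
      ((parentGraph (parent S blk)).induce W'ᶜ).Reachable
        ⟨.inl ⟨u, hu⟩, fun h => huU (Option.some_injective _ h)⟩
        ⟨centre S blk false, by simp [W', centre, blockOf]⟩ :=
    (reachable_centre rfl _ (by rcases blockOf_attach (S := S) (blk := blk) (blk u) with h | h <;>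
        simp [W', h, huU]) (by simp [W', centre, blockOf])).trans
      (reachable_centre_centre _ _)
  have hzw : ((parentGraph (parent S blk)).induce W').Reachable
      ⟨.inl ⟨z, hz⟩, congrArg some hzU⟩ ⟨.inl ⟨w, hw⟩, congrArg some hwU⟩ := by
    by_cases hnt : (block S blk U).Nontrivial
    · have to_hub {u : L} (hu : u ∈ S) (huU : blk u = U) :=
        parentGraph_reachable_induce_of_parent_eq (p := parent S blk) (W := W')
          (v := .inl ⟨u, hu⟩) (congrArg some huU) (w := hub ⟨U, hnt⟩) rfl
          (by simp only [parent, huU, attach_of_nontrivial hnt])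
      exact (to_hub hz hzU).trans (to_hub hw hwU).symm
    · obtain rfl : z = w := Set.not_nontrivial_iff.1 hnt ⟨hz, hzU⟩ ⟨hw, hwU⟩
      rfl
  exact UTree.displays4_of_reachable disjoint_compl_left
    ((reach hx hxU).trans (reach hy hyU).symm) hzw

end SplitTree

open SplitTree

@[simp] theorem inl_mem_Lst {s t k : ℕ} : (Sum.inl k : ℕ ⊕ ℕ) ∈ Lst s t ↔ 1 ≤ k ∧ k ≤ s := by
  simp [Lst]

@[simp] theorem inr_mem_Lst {s t l : ℕ} : (Sum.inr l : ℕ ⊕ ℕ) ∈ Lst s t ↔ 1 ≤ l ∧ l ≤ t := by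
  simp [Lst]

instance (s t : ℕ) : Finite (Lst s t) :=
  ((Set.finite_Icc 1 s).image _ |>.union ((Set.finite_Icc 1 t).image _)).to_subtype

theorem mem_Qst {s t : ℕ} {q : Sym2 (Sym2 (ℕ ⊕ ℕ))} :
    q ∈ Qst s t ↔ q = quartet (.inl 1) (.inr 1) (.inl s) (.inr t) ∨
      ∃ i j, (1 ≤ i ∧ i < s) ∧ (1 ≤ j ∧ j < t) ∧
        q = quartet (.inl i) (.inl (i + 1)) (.inr j) (.inr (j + 1)) := by
  simp [Qst, eq_comm, and_assoc]

def cutBlocks (i j : ℕ) : ℕ ⊕ ℕ → Bool × Bool :=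
  Sum.elim (fun k => (decide (i < k), false)) (fun l => (decide (j < l), true))

theorem cutBlocks_nonempty {s t i j : ℕ} (hi : 1 ≤ i ∧ i < s) (hj : 1 ≤ j ∧ j < t)
    (U : Bool × Bool) : (block (Lst s t) (cutBlocks i j) U).Nonempty := by
  obtain ⟨_ | _, _ | _⟩ := U
  · exact ⟨.inl i, by simp [block, cutBlocks]; omega⟩
  · exact ⟨.inr j, by simp [block, cutBlocks]; omega⟩
  · exact ⟨.inl (i + 1), by simp [block, cutBlocks]; omega⟩
  · exact ⟨.inr (j + 1), by simp [block, cutBlocks]; omega⟩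

theorem qCompat_Qst_sdiff_outer {s t : ℕ} (hs : 2 ≤ s) (ht : 2 ≤ t) :
    QCompat (Lst s t) (↑(Qst s t) \ {quartet (.inl 1) (.inr 1) (.inl s) (.inr t)}) := by
  -- `Prod.swap ∘ cutBlocks 1 1` puts the `a`'s on one side and the `b`'s on the other.
  have hne := block_swap_nonempty (cutBlocks_nonempty (s := s) (t := t) ⟨le_rfl, hs⟩ ⟨le_rfl, ht⟩)
  refine ⟨splitTree _ _ hne, ?_⟩
  rintro _ ⟨hq, hq_ne⟩
  rcases mem_Qst.1 hq with rfl | ⟨k, l, hk, hl, rfl⟩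
  · exact absurd rfl hq_ne
  · exact UTree.displays_quartet <| displays4_of_side hne (by simp; omega) (by simp; omega)
      (by simp; omega) (by simp; omega) rfl rfl (by simp [cutBlocks])

theorem qCompat_Qst_sdiff_inner {s t i j : ℕ} (hi : 1 ≤ i ∧ i < s) (hj : 1 ≤ j ∧ j < t) :
    QCompat (Lst s t)
      (↑(Qst s t) \ {quartet (.inl i) (.inl (i + 1)) (.inr j) (.inr (j + 1))}) := by
  refine ⟨splitTree _ _ (cutBlocks_nonempty hi hj), ?_⟩
  rintro _ ⟨hq, hq_ne⟩
  rcases mem_Qst.1 hq with rfl | ⟨k, l, hk, hl, rfl⟩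
  · exact UTree.displays_quartet <| displays4_of_side _ (by simp; omega) (by simp; omega)
      (by simp; omega) (by simp; omega) (by simp [cutBlocks]; omega)
      (by simp [cutBlocks]; omega) (by simp [cutBlocks]; omega)
  by_cases hlj : l = j
  · subst hlj
    have hki : k ≠ i := by rintro rfl; exact hq_ne rfl
    exact UTree.displays_quartet <| UTree.displays4_comm <|
      displays4_of_block _ (U := cutBlocks i l (.inl k)) (by simp; omega) (by simp; omega)
        (by simp; omega) (by simp; omega) (by simp [cutBlocks]) (by simp [cutBlocks]) rfl
        (by simp [cutBlocks]; omega)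
  · exact UTree.displays_quartet <|
      displays4_of_block _ (U := cutBlocks i j (.inr l)) (by simp; omega) (by simp; omega)
        (by simp; omega) (by simp; omega) (by simp [cutBlocks]) (by simp [cutBlocks]) rfl
        (by simp [cutBlocks]; omega)

/-- for all s, t ≥ 2 and every q ∈ Q_{s,t}, `Q_{s,t} \ {q}` is compatible. -/
theorem Qst_minus_one_compatible (s t : ℕ) (hs : 2 ≤ s) (ht : 2 ≤ t)
    (q : Sym2 (Sym2 (ℕ ⊕ ℕ))) (hq : q ∈ Qst s t) :
    QCompat (Lst s t) (↑(Qst s t) \ {q}) := by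
  rcases mem_Qst.1 hq with rfl | ⟨i, j, hi, hj, rfl⟩
  · exact qCompat_Qst_sdiff_outer hs ht
  · exact qCompat_Qst_sdiff_inner hi hj
end

section
/- For every n ≥ 3, if R is an incompatible set of rooted triplets over n labels with |R| > n - 1, then some proper subset of R is incompatible. -/
open SimpleGraph

universe u

/-!
Bryant–Steel, in both directions. If `[R,S]` is disconnected for every nontrivial `S`, the clusters
of Aho's BUILD algorithm form a laminar family whose Hasse diagram is a rooted tree displaying `R`;
so an incompatible `R` has a nontrivial `S` with `[R,S]` connected. Conversely, in a tree displaying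
a set of triplets, every edge of `[R,S]` joins two leaves that meet strictly below the most recent
common ancestor of `S`, so `[R,S]` is disconnected. A spanning tree of a connected `[R,S]` has
`|S| - 1 ≤ n - 1 < |R|` edges; one triplet per edge gives a proper subset `R₀` of `R` with
`[R₀,S]` still connected, hence incompatible.
-/

section TreeOrder

variable {α : Type*} [PartialOrder α]

theorem Set.Finite.exists_isLeast_of_isChain {s : Set α} (hs : s.Finite) (hne : s.Nonempty)
    (hc : IsChain (· ≤ ·) s) : ∃ m, IsLeast s m := by
  obtain ⟨m, hm⟩ := hs.exists_minimal hne
  refine ⟨m, hm.prop, fun w hw => ?_⟩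
  rcases hc.total hm.prop hw with h | h
  · exact h
  · exact hm.2 hw h

theorem Set.Finite.exists_isGreatest_of_isChain {s : Set α} (hs : s.Finite) (hne : s.Nonempty)
    (hc : IsChain (· ≤ ·) s) : ∃ m, IsGreatest s m := by
  obtain ⟨m, hm⟩ := hs.exists_maximal hne
  refine ⟨m, hm.prop, fun w hw => ?_⟩
  rcases hc.total hm.prop hw with h | h
  · exact hm.2 hw h
  · exact h

variable (hα : ∀ a : α, IsChain (· ≤ ·) (Set.Ici a))
include hα

theorem exists_isLUB_of_isChain_Ici [Finite α] {t : α} (ht : ∀ a, a ≤ t) {A : Set α}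
    (hA : A.Nonempty) : ∃ m, IsLUB A m := by
  obtain ⟨a, ha⟩ := hA
  exact (Set.toFinite _).exists_isLeast_of_isChain ⟨t, fun b _ => ht b⟩
    ((hα a).mono fun w hw => hw ha)

theorem CovBy.le_of_lt_of_isChain_Ici {a b c : α} (hab : a ⋖ b) (hac : a < c) : b ≤ c := by
  rcases (hα a).total (Set.mem_Ici.2 hab.le) (Set.mem_Ici.2 hac.le) with h | h
  · exact h
  · rcases h.lt_or_eq with h | rfl
    · exact absurd h (hab.2 hac)
    · exact le_rfl

theorem CovBy.eq_of_isChain_Ici {a b c : α} (hab : a ⋖ b) (hac : a ⋖ c) : b = c :=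
  le_antisymm (hab.le_of_lt_of_isChain_Ici hα hac.lt) (hac.le_of_lt_of_isChain_Ici hα hab.lt)

theorem hasse_neighborSet_eq_singleton_of_isMin {a b : α} (ha : IsMin a) (hab : a ⋖ b) :
    (hasse α).neighborSet a = {b} := by
  ext c
  refine ⟨?_, fun h => h ▸ Or.inl hab⟩
  rintro (h | h)
  · exact (hab.eq_of_isChain_Ici hα h).symm
  · exact absurd h.lt ha.not_lt

omit hα in
theorem three_le_ncard_hasse_neighborSet [Finite α] {a b c d : α} (hab : a ⋖ b) (hca : c ⋖ a)
    (hda : d ⋖ a) (hcd : c ≠ d) : 3 ≤ ((hasse α).neighborSet a).ncard := by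
  have hbc : b ≠ c := (hca.lt.trans hab.lt).ne'
  have hbd : b ≠ d := (hda.lt.trans hab.lt).ne'
  rw [← Set.ncard_eq_three.2 ⟨b, c, d, hbc, hbd, hcd, rfl⟩]
  refine Set.ncard_le_ncard ?_ (Set.toFinite _)
  rintro _ (rfl | rfl | rfl)
  exacts [Or.inl hab, Or.inr hca, Or.inr hda]

variable [Finite α]

theorem exists_hasse_isPath_support_eq_Ici {t : α} (ht : ∀ a, a ≤ t) (a : α) :
    ∃ p : (hasse α).Walk a t, p.IsPath ∧ ∀ w, w ∈ p.support ↔ a ≤ w := by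
  induction a using WellFoundedGT.induction with
  | _ a ih =>
  rcases (ht a).eq_or_lt with rfl | hlt
  · exact ⟨.nil, .nil, fun w => by simpa using ⟨fun h => h ▸ le_rfl, fun h => h.antisymm' (ht w)⟩⟩
  obtain ⟨b, hab, -⟩ := exists_covBy_le_of_lt hlt
  obtain ⟨p, hp, hsupp⟩ := ih b hab.lt
  refine ⟨.cons (hasse_adj.2 (Or.inl hab)) p, hp.cons fun h => hab.lt.not_ge ((hsupp a).1 h),
    fun w => ?_⟩
  rw [Walk.support_cons, List.mem_cons, hsupp]
  refine ⟨?_, fun h => ?_⟩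
  · rintro (rfl | h)
    exacts [le_rfl, hab.le.trans h]
  · rcases h.eq_or_lt with rfl | h
    exacts [Or.inl rfl, Or.inr (hab.le_of_lt_of_isChain_Ici hα h)]

theorem hasse_isAcyclic_of_isChain_Ici : (hasse α).IsAcyclic := by
  classical
  intro v c hc
  obtain ⟨m, hm⟩ := (Set.toFinite {x | x ∈ c.support}).exists_minimal ⟨v, c.start_mem_support⟩
  have hc' := hc.rotate hm.prop
  have hup : ∀ w, (hasse α).Adj m w → w ∈ (c.rotate m hm.prop).support → m ⋖ w := by
    rintro w (h | h) hw
    · exact h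
    · exact absurd (hm.2 ((c.mem_support_rotate_iff _ _).1 hw) h.le) h.lt.not_ge
  exact hc'.snd_ne_penultimate <| CovBy.eq_of_isChain_Ici hα
    (hup _ (Walk.adj_snd hc'.not_nil) (Walk.getVert_mem_support _ _))
    (hup _ (Walk.adj_penultimate hc'.not_nil).symm (Walk.getVert_mem_support _ _))

theorem hasse_isTree_of_isChain_Ici {t : α} (ht : ∀ a, a ≤ t) : (hasse α).IsTree := by
  refine ⟨(connected_iff_exists_forall_reachable _).2 ⟨t, fun a => ?_⟩,
    hasse_isAcyclic_of_isChain_Ici hα⟩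
  obtain ⟨p, -⟩ := exists_hasse_isPath_support_eq_Ici hα ht a
  exact ⟨p.reverse⟩

end TreeOrder

namespace RTree

variable {L : Type*} {S : Set L} (T : RTree L S)

theorem exists_isPath_from_root (v : T.V) : ∃ p : T.G.Walk T.root v, p.IsPath :=
  (T.isTree.existsUnique_path _ _).exists

theorem anc_iff_mem_support {u v : T.V} {p : T.G.Walk T.root v} (hp : p.IsPath) :
    T.anc u v ↔ u ∈ p.support :=
  ⟨fun ⟨_, hq, hu⟩ => (T.isTree.existsUnique_path _ _).unique hq hp ▸ hu, fun hu => ⟨p, hp, hu⟩⟩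

theorem anc_refl (v : T.V) : T.anc v v :=
  let ⟨p, hp⟩ := T.exists_isPath_from_root v
  ⟨p, hp, p.end_mem_support⟩

theorem anc_root (v : T.V) : T.anc T.root v :=
  let ⟨p, hp⟩ := T.exists_isPath_from_root v
  ⟨p, hp, p.start_mem_support⟩

theorem anc_trans {u v w : T.V} (huv : T.anc u v) (hvw : T.anc v w) : T.anc u w := by
  classical
  obtain ⟨p, hp, hv⟩ := hvw
  exact ⟨p, hp, p.support_takeUntil_subset_support hv
    ((T.anc_iff_mem_support (hp.takeUntil hv)).1 huv)⟩

theorem anc_antisymm {u v : T.V} (huv : T.anc u v) (hvu : T.anc v u) : u = v := by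
  classical
  by_contra hne
  obtain ⟨p, hp, hu⟩ := huv
  have hv := (T.anc_iff_mem_support (hp.takeUntil hu)).1 hvu
  -- the path from the root to `v` would be a proper initial segment of itself
  have hpv := (T.isTree.existsUnique_path _ _).unique ((hp.takeUntil hu).takeUntil hv) hp
  have := Walk.length_takeUntil_le_length (p.takeUntil u hu) hv
  have := Walk.length_takeUntil_lt_length hu hne
  rw [hpv] at *
  omega

theorem anc_total {u v w : T.V} (huw : T.anc u w) (hvw : T.anc v w) : T.anc u v ∨ T.anc v u := by
  classical
  obtain ⟨p, hp, hu⟩ := huw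
  have hv := (T.anc_iff_mem_support hp).1 hvw
  rcases List.prefix_or_prefix_of_prefix (p.support_takeUntil_prefix_support hu)
    (p.support_takeUntil_prefix_support hv) with h | h
  · exact .inl ⟨_, hp.takeUntil hv, h.subset (p.takeUntil u hu).end_mem_support⟩
  · exact .inr ⟨_, hp.takeUntil hu, h.subset (p.takeUntil v hv).end_mem_support⟩

abbrev ancOrder : PartialOrder T.V where
  le u v := T.anc v u
  le_refl := T.anc_refl
  le_trans _ _ _ h₁ h₂ := T.anc_trans h₂ h₁
  le_antisymm _ _ h₁ h₂ := T.anc_antisymm h₂ h₁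

open Classical in
noncomputable def leaf (x : L) : T.V :=
  if h : x ∈ S then T.label ⟨x, h⟩ else T.root

theorem leaf_of_mem {x : L} (h : x ∈ S) : T.leaf x = T.label ⟨x, h⟩ := by
  simp [leaf, h]

end RTree

def TripConnected {L : Type*} (R : Set (Sym2 L × L)) (S : Set L) : Prop :=
  ∀ x ∈ S, ∀ y ∈ S, (tripGraph R S).Reachable x y

theorem RTree.not_tripConnected {L : Type*} {S : Set L} {R : Set (Sym2 L × L)} (T : RTree L S)
    (hT : ∀ t ∈ R, T.displays t) {S' : Set L} (hnt : S'.Nontrivial) :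
    ¬ TripConnected R S' := by
  intro hconn
  let _ := T.ancOrder
  have : Finite T.V := @Finite.of_fintype _ T.fV
  have hα : ∀ v : T.V, IsChain (· ≤ ·) (Set.Ici v) := fun _ _ hx _ hy _ => (T.anc_total hx hy).symm
  obtain ⟨M, hM⟩ := exists_isLUB_of_isChain_Ici hα T.anc_root (hnt.nonempty.image T.leaf)
  -- `M` is the most recent common ancestor of the leaves of `S'`; an edge of `[R,S']` joins two
  -- leaves that already meet strictly below `M`.
  let rel (x y : L) : Prop := ∃ w < M, T.leaf x ≤ w ∧ T.leaf y ≤ w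
  have rel_trans (x y z : L) : rel x y → rel y z → rel x z := by
    rintro ⟨w₁, hw₁M, hxw₁, hyw₁⟩ ⟨w₂, hw₂M, hyw₂, hzw₂⟩
    rcases (hα (T.leaf y)).total hyw₁ hyw₂ with h | h
    · exact ⟨w₂, hw₂M, hxw₁.trans h, hzw₂⟩
    · exact ⟨w₁, hw₁M, hxw₁, hzw₂.trans h⟩
  have rel_of_adj (x y : L) : (tripGraph R S').Adj x y → rel x y := by
    rintro ⟨-, hx, hy, c, hc, ht⟩
    obtain ⟨hxS, hyS, hcS, m, M', hm, hM', hmM', hne⟩ := hT _ ht x y c rfl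
    simp only [← T.leaf_of_mem] at hm hM'
    have hM'M : M' ≤ M := hM'.2 M fun v hv => by
      rcases hv with rfl | rfl | rfl <;> exact hM.1 ⟨_, ‹_›, rfl⟩
    exact ⟨m, (lt_of_le_of_ne hmM' (Ne.symm hne)).trans_le hM'M,
      hm.1 _ (.inl rfl), hm.1 _ (.inr rfl)⟩
  have rel_of_ne (x y : L) (hx : x ∈ S') (hy : y ∈ S') (hxy : x ≠ y) : rel x y := by
    have h := (reachable_iff_reflTransGen _ _).1 (hconn x hx y hy)
    exact (Relation.reflTransGen_iff_eq_or_transGen.1 h).resolve_left (Ne.symm hxy)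
      |>.trans_induction_on (rel_of_adj _ _) fun _ _ => rel_trans _ _ _
  obtain ⟨x₀, hx₀, y₀, hy₀, hx₀y₀⟩ := hnt
  have hrel (y : L) (hy : y ∈ S') : rel x₀ y := by
    rcases eq_or_ne x₀ y with rfl | hne
    · exact rel_trans _ _ _ (rel_of_ne _ _ hx₀ hy₀ hx₀y₀) (rel_of_ne _ _ hy₀ hx₀ hx₀y₀.symm)
    · exact rel_of_ne _ _ hx₀ hy hne
  -- the highest vertex strictly below `M` above the leaf `x₀` is a common ancestor of `S'`
  obtain ⟨w, hw⟩ := (Set.toFinite {w | w < M ∧ T.leaf x₀ ≤ w}).exists_isGreatest_of_isChain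
    (let ⟨w, hwM, hx, _⟩ := hrel x₀ hx₀; ⟨w, hwM, hx⟩) ((hα _).mono fun _ hw => hw.2)
  refine hw.1.1.not_ge (hM.2 ?_)
  rintro _ ⟨y, hy, rfl⟩
  obtain ⟨w', hw'M, hxw', hyw'⟩ := hrel y hy
  exact hyw'.trans (hw.2 ⟨hw'M, hxw'⟩)

structure IsHierarchy {L : Type*} (S : Set L) (H : Set (Set L)) : Prop where
  finite : S.Finite
  self_mem : S ∈ H
  subset : ∀ B ∈ H, B ⊆ S
  nonempty : ∀ B ∈ H, B.Nonempty
  singleton_mem : ∀ x ∈ S, {x} ∈ H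
  nested_or_disjoint : ∀ A ∈ H, ∀ B ∈ H, A ⊆ B ∨ B ⊆ A ∨ Disjoint A B

namespace IsHierarchy

variable {L : Type*} {S : Set L} {H : Set (Set L)} (hH : IsHierarchy S H)
include hH

theorem finite_family : H.Finite := hH.finite.finite_subsets.subset hH.subset

theorem le_top (B : H) : B ≤ ⟨S, hH.self_mem⟩ := hH.subset B B.2

theorem isChain_Ici (B : H) : IsChain (· ≤ ·) (Set.Ici B) := by
  intro C hC D hD _
  obtain ⟨x, hx⟩ := hH.nonempty B B.2
  rcases hH.nested_or_disjoint C C.2 D D.2 with h | h | h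
  · exact .inl h
  · exact .inr h
  · exact absurd h (Set.not_disjoint_iff.2 ⟨x, hC hx, hD hx⟩)

theorem isMin_singleton {x : L} (hx : x ∈ S) : IsMin (⟨{x}, hH.singleton_mem x hx⟩ : H) := by
  intro B hB z hz
  obtain ⟨y, hy⟩ := hH.nonempty B B.2
  have hyx : y = x := hB hy
  rwa [Set.mem_singleton_iff.1 hz, ← hyx]

theorem singleton_lt {B : H} (hB : B.1.Nontrivial) {x : L} (hx : x ∈ B.1) :
    (⟨{x}, hH.singleton_mem x (hH.subset B B.2 hx)⟩ : H) < B :=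
  lt_of_le_of_ne (Set.singleton_subset_iff.2 hx) fun h =>
    hB.ne_singleton (congrArg Subtype.val h).symm

theorem exists_covBy_ne {B : H} (hB : B.1.Nontrivial) : ∃ C D : H, C ⋖ B ∧ D ⋖ B ∧ C ≠ D := by
  have := hH.finite_family.to_subtype
  obtain ⟨x, hx⟩ := hB.nonempty
  obtain ⟨C, hxC, hC⟩ := exists_le_covBy_of_lt (hH.singleton_lt hB hx)
  obtain ⟨y, hyB, hyC⟩ := Set.exists_of_ssubset hC.lt
  obtain ⟨D, hyD, hD⟩ := exists_le_covBy_of_lt (hH.singleton_lt hB hyB)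
  exact ⟨C, D, hC, hD, fun h => hyC (h ▸ hyD rfl)⟩

theorem ncard_neighborSet_singleton (hS : S.Nontrivial) {x : L} (hx : x ∈ S) :
    ((hasse H).neighborSet ⟨{x}, hH.singleton_mem x hx⟩).ncard = 1 := by
  have := hH.finite_family.to_subtype
  obtain ⟨P, hP, -⟩ := exists_covBy_le_of_lt
    (lt_of_le_of_ne (hH.le_top ⟨{x}, hH.singleton_mem x hx⟩)
      fun h => hS.ne_singleton (congrArg Subtype.val h).symm)
  rw [hasse_neighborSet_eq_singleton_of_isMin hH.isChain_Ici (hH.isMin_singleton hx) hP,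
    Set.ncard_singleton]

theorem three_le_ncard_neighborSet {B : H} (hB : B.1.Nontrivial) (hBS : B.1 ≠ S) :
    3 ≤ ((hasse H).neighborSet B).ncard := by
  have := hH.finite_family.to_subtype
  obtain ⟨P, hP, -⟩ := exists_covBy_le_of_lt (lt_of_le_of_ne (hH.le_top B)
    fun h => hBS (congrArg Subtype.val h))
  obtain ⟨C, D, hC, hD, hCD⟩ := hH.exists_covBy_ne hB
  exact three_le_ncard_hasse_neighborSet hP hC hD hCD

theorem exists_eq_singleton {B : H} (hB : ¬ B.1.Nontrivial) : ∃ x ∈ S, B.1 = {x} := by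
  obtain ⟨x, hx⟩ := hH.nonempty B B.2
  exact ⟨x, hH.subset B B.2 hx, (Set.not_nontrivial_iff.1 hB).eq_singleton_of_mem hx⟩

end IsHierarchy

namespace IsHierarchy

variable {L : Type} {S : Set L} {H : Set (Set L)} (hH : IsHierarchy S H) (hS : S.Nontrivial)

noncomputable abbrev toRTree : RTree L S where
  V := H
  fV := @Fintype.ofFinite _ hH.finite_family.to_subtype
  G := hasse H
  isTree := @hasse_isTree_of_isChain_Ici _ _ hH.isChain_Ici hH.finite_family.to_subtype _ hH.le_top
  root := ⟨S, hH.self_mem⟩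
  label x := ⟨{x.1}, hH.singleton_mem x.1 x.2⟩
  labelInj x y h := Subtype.ext (Set.singleton_eq_singleton_iff.1 (congrArg Subtype.val h))
  leafIff B := by
    refine ⟨?_, fun ⟨h1, hroot⟩ => ?_⟩
    · rintro ⟨x, rfl⟩
      exact ⟨hH.ncard_neighborSet_singleton hS x.2,
        fun h => hS.ne_singleton (congrArg Subtype.val h).symm⟩
    · by_cases hB : B.1.Nontrivial
      · have := hH.three_le_ncard_neighborSet hB fun h => hroot (Subtype.ext h)
        omega
      · obtain ⟨x, hx, hBx⟩ := hH.exists_eq_singleton hB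
        exact ⟨⟨x, hx⟩, Subtype.ext hBx.symm⟩
  noDeg2 B hroot := by
    by_cases hB : B.1.Nontrivial
    · have := hH.three_le_ncard_neighborSet hB fun h => hroot (Subtype.ext h)
      omega
    · obtain ⟨x, hx, hBx⟩ := hH.exists_eq_singleton hB
      obtain rfl : B = ⟨{x}, hH.singleton_mem x hx⟩ := Subtype.ext hBx
      rw [hH.ncard_neighborSet_singleton hS hx]
      omega

theorem toRTree_anc_iff {u v : H} : (hH.toRTree hS).anc u v ↔ v ≤ u := by
  have := hH.finite_family.to_subtype
  obtain ⟨p, hp, hsupp⟩ := exists_hasse_isPath_support_eq_Ici hH.isChain_Ici hH.le_top v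
  rw [RTree.anc_iff_mem_support _ (p := p.reverse) hp.reverse, Walk.support_reverse,
    List.mem_reverse, hsupp]

theorem toRTree_isMRCA_iff {A : Set H} {m : H} : (hH.toRTree hS).isMRCA A m ↔ IsLUB A m := by
  simp only [RTree.isMRCA, toRTree_anc_iff]
  rfl

theorem toRTree_displays3 {a b c : L} (ha : a ∈ S) (hb : b ∈ S) (hc : c ∈ S)
    (hsep : ∀ B ∈ H, a ∈ B → b ∈ B → c ∈ B → ∃ B' ∈ H, B' ⊂ B ∧ a ∈ B' ∧ b ∈ B') :
    (hH.toRTree hS).displays3 a b c := by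
  have := hH.finite_family.to_subtype
  set T := hH.toRTree hS
  obtain ⟨m, hm⟩ := exists_isLUB_of_isChain_Ici hH.isChain_Ici hH.le_top
    (Set.insert_nonempty (T.label ⟨a, ha⟩) {T.label ⟨b, hb⟩})
  obtain ⟨M, hM⟩ := exists_isLUB_of_isChain_Ici hH.isChain_Ici hH.le_top
    (Set.insert_nonempty (T.label ⟨a, ha⟩) {T.label ⟨b, hb⟩, T.label ⟨c, hc⟩})
  refine ⟨ha, hb, hc, m, M, (hH.toRTree_isMRCA_iff hS).2 hm, (hH.toRTree_isMRCA_iff hS).2 hM,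
    (hH.toRTree_anc_iff hS).2 (hm.mono hM (Set.insert_subset_insert (by simp))), fun hMm => ?_⟩
  obtain ⟨B', hB'H, hB'm, haB', hbB'⟩ := hsep m.1 m.2 (hm.1 (.inl rfl) rfl)
    (hm.1 (.inr rfl) rfl) (hMm ▸ hM.1 (.inr (.inr rfl)) rfl)
  have hB' : (⟨B', hB'H⟩ : H) ∈ upperBounds {T.label ⟨a, ha⟩, T.label ⟨b, hb⟩} := by
    rintro _ (rfl | rfl)
    exacts [Set.singleton_subset_iff.2 haB', Set.singleton_subset_iff.2 hbB']
  exact hB'm.2 (hm.2 hB')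

end IsHierarchy

section Build

variable {L : Type*} {R : Set (Sym2 L × L)}

theorem IsTriplet.ne {a b c : L} (h : IsTriplet (s(a, b), c)) : a ≠ b := by
  obtain ⟨a', b', c', hab', -, -, heq⟩ := h
  rintro rfl
  exact hab' (Sym2.mk_isDiag_iff.1 ((Prod.mk.inj heq).1 ▸ Sym2.mk_isDiag_iff.2 rfl))

def tripComponent (R : Set (Sym2 L × L)) (S : Set L) (x : L) : Set L :=
  {y ∈ S | (tripGraph R S).Reachable x y}

theorem tripComponent_subset {S : Set L} {x : L} : tripComponent R S x ⊆ S := fun _ h => h.1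

theorem mem_tripComponent_self {S : Set L} {x : L} (hx : x ∈ S) : x ∈ tripComponent R S x :=
  ⟨hx, .rfl⟩

theorem tripComponent_eq_or_disjoint (S : Set L) (x y : L) :
    tripComponent R S x = tripComponent R S y ∨
      Disjoint (tripComponent R S x) (tripComponent R S y) := by
  refine or_iff_not_imp_right.2 fun h => ?_
  obtain ⟨z, hzx, hzy⟩ := Set.not_disjoint_iff.1 h
  ext w
  exact ⟨fun hw => ⟨hw.1, hzy.2.trans (hzx.2.symm.trans hw.2)⟩,
    fun hw => ⟨hw.1, hzx.2.trans (hzy.2.symm.trans hw.2)⟩⟩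

variable (R) in
/-- The clusters of Aho's BUILD algorithm on `S`: `S` itself and, recursively, the clusters of the
connected components of `[R,S]`. -/
inductive IsCluster : Set L → Set L → Prop
  | refl (S : Set L) : IsCluster S S
  | component {S B : Set L} {x : L} : x ∈ S → IsCluster (tripComponent R S x) B → IsCluster S B

namespace IsCluster

variable {S A B C : Set L}

theorem subset (h : IsCluster R S B) : B ⊆ S := by
  induction h with
  | refl => exact subset_rfl
  | component _ _ ih => exact ih.trans tripComponent_subset

theorem nonempty (h : IsCluster R S B) (hS : S.Nonempty) : B.Nonempty := by
  induction h with
  | refl => exact hS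
  | component hx _ ih => exact ih ⟨_, mem_tripComponent_self hx⟩

theorem trans (hB : IsCluster R S B) (hC : IsCluster R B C) : IsCluster R S C := by
  induction hB with
  | refl => exact hC
  | component hx _ ih => exact .component hx (ih hC)

theorem nested_or_disjoint (hA : IsCluster R S A) (hB : IsCluster R S B) :
    A ⊆ B ∨ B ⊆ A ∨ Disjoint A B := by
  induction hA generalizing B with
  | refl => exact .inr (.inl hB.subset)
  | @component S A x _ hA ih =>
    cases hB with
    | refl => exact .inl (hA.subset.trans tripComponent_subset)
    | @component _ _ y _ hB =>
      rcases tripComponent_eq_or_disjoint S x y with h | h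
      · exact ih (h ▸ hB)
      · exact .inr (.inr (h.mono hA.subset hB.subset))

theorem singleton {S₀ : Set L} (hS₀ : S₀.Finite)
    (hsplit : ∀ B ⊆ S₀, B.Nontrivial → ∀ x ∈ B, tripComponent R B x ⊂ B)
    (hS : S ⊆ S₀) {x : L} (hx : x ∈ S) : IsCluster R S {x} := by
  induction h : S.ncard using Nat.strong_induction_on generalizing S with
  | _ n ih =>
  by_cases hnt : S.Nontrivial
  · refine .component hx (ih _ ?_ (tripComponent_subset.trans hS) (mem_tripComponent_self hx) rfl)
    exact h ▸ Set.ncard_lt_ncard (hsplit S hS hnt x hx) (hS₀.subset hS)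
  · rw [(Set.not_nontrivial_iff.1 hnt).eq_singleton_of_mem hx]
    exact .refl _

end IsCluster

end Build

theorem rCompat_of_forall_not_tripConnected {L : Type} {R : Set (Sym2 L × L)} {S : Set L}
    (hR : ∀ t ∈ R, IsTriplet t) (hS : S.Finite) (hnt : S.Nontrivial) (hRS : tLabelSet R ⊆ S)
    (hdis : ∀ B ⊆ S, B.Nontrivial → ¬ TripConnected R B) : RCompat S R := by
  have hsplit (B : Set L) (hBS : B ⊆ S) (hB : B.Nontrivial) (x : L) (hx : x ∈ B) :
      tripComponent R B x ⊂ B := by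
    refine tripComponent_subset.ssubset_of_ne fun h => hdis B hBS hB fun y hy z hz => ?_
    rw [← h] at hy hz
    exact hy.2.symm.trans hz.2
  have hH : IsHierarchy S {B | IsCluster R S B} :=
    { finite := hS
      self_mem := .refl S
      subset := fun _ hB => hB.subset
      nonempty := fun _ hB => hB.nonempty hnt.nonempty
      singleton_mem := fun _ hx => .singleton hS hsplit subset_rfl hx
      nested_or_disjoint := fun _ hA _ hB => hA.nested_or_disjoint hB }
  refine ⟨hH.toRTree hnt, ?_⟩
  rintro t ht a b c rfl
  have hab := (hR _ ht).ne
  -- `ab|c` is an edge of `[R,B]` for every cluster `B ∋ a, b, c`, so the component of `a` in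
  -- `[R,B]` is a smaller cluster still containing `a` and `b`
  refine hH.toRTree_displays3 hnt (hRS ⟨_, ht, .inl (Sym2.mem_mk_left a b)⟩)
    (hRS ⟨_, ht, .inl (Sym2.mem_mk_right a b)⟩) (hRS ⟨_, ht, .inr rfl⟩)
    fun B hB haB hbB hcB => ⟨tripComponent R B a, hB.trans (.component haB (.refl _)),
      hsplit B hB.subset ⟨a, haB, b, hbB, hab⟩ a haB, mem_tripComponent_self haB,
      hbB, (show (tripGraph R B).Adj a b from ⟨hab, haB, hbB, c, hcB, ht⟩).reachable⟩

section SpanningTree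

variable {L : Type*} {R : Set (Sym2 L × L)} {S : Set L}

theorem tripGraph_walk_support_subset {x y : L} (p : (tripGraph R S).Walk x y) (hy : y ∈ S) :
    ∀ z ∈ p.support, z ∈ S := by
  induction p with
  | nil => simpa using hy
  | cons hadj _ ih =>
    simp only [Walk.support_cons, List.mem_cons, forall_eq_or_imp]
    exact ⟨hadj.2.1, ih hy⟩

theorem TripConnected.exists_subset_ncard_lt (h : TripConnected R S) (hS : S.Finite)
    (hne : S.Nonempty) :
    ∃ R₀ ⊆ R, R₀.ncard < S.ncard ∧ TripConnected R₀ S := by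
  have := hS.to_subtype
  have := hne.to_subtype
  have hconn : ((tripGraph R S).induce S).Connected := by
    refine Connected.mk fun x y => ?_
    obtain ⟨p⟩ := h x.1 x.2 y.1 y.2
    exact ⟨p.induce S (tripGraph_walk_support_subset p y.2)⟩
  obtain ⟨T, hTle, hT⟩ := hconn.exists_isTree_le
  -- one triplet of `R` for each edge of a spanning tree `T` of `[R,S]`
  have hpick (e : Sym2 S) (he : e ∈ T.edgeSet) : ∃ t ∈ R, t.1 = e.map Subtype.val ∧ t.2 ∈ S := by
    induction e using Sym2.ind with
    | _ x y =>
    obtain ⟨-, -, -, c, hc, ht⟩ := hTle he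
    exact ⟨_, ht, rfl, hc⟩
  have : Nonempty (Sym2 L × L) := ⟨(s(hne.some, hne.some), hne.some)⟩
  choose! f hfR hf1 hf2 using hpick
  refine ⟨f '' T.edgeSet, Set.image_subset_iff.2 hfR, ?_, fun x hx y hy => ?_⟩
  · have hcard := (isTree_iff_connected_and_card.1 hT).2
    rw [Nat.card_coe_set_eq, Nat.card_coe_set_eq] at hcard
    have := Set.ncard_image_le (f := f) (Set.toFinite T.edgeSet)
    omega
  · have hadj (a b : S) (hab : T.Adj a b) : (tripGraph (f '' T.edgeSet) S).Adj a b :=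
      ⟨fun h => hab.ne (Subtype.ext h), a.2, b.2, _, hf2 _ hab,
        ⟨s(a, b), hab, Prod.ext (hf1 _ hab) rfl⟩⟩
    obtain ⟨p⟩ := hT.connected ⟨x, hx⟩ ⟨y, hy⟩
    exact ⟨p.map ⟨Subtype.val, hadj _ _⟩⟩

end SpanningTree

theorem incompatible_triplets_upper_bound_general (n : ℕ) (hn : 3 ≤ n)
    (R : Set (Sym2 ℕ × ℕ)) (hR : ∀ t ∈ R, IsTriplet t)
    (hlab : (tLabelSet R).ncard = n)
    (hinc : ¬ RCompat (tLabelSet R) R)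
    (hcard : n - 1 < R.ncard) :
    ∃ R', R' ⊂ R ∧ ¬ RCompat (tLabelSet R') R' := by
  have hfin : (tLabelSet R).Finite := Set.finite_of_ncard_pos (by omega)
  have hnt : (tLabelSet R).Nontrivial :=
    (Set.one_lt_ncard_iff_nontrivial_and_finite.1 (by omega)).1
  obtain ⟨S, hSR, hSnt, hSconn⟩ : ∃ S ⊆ tLabelSet R, S.Nontrivial ∧ TripConnected R S := by
    by_contra! h
    exact hinc (rCompat_of_forall_not_tripConnected hR hfin hnt subset_rfl h)
  obtain ⟨R₀, hR₀R, hR₀card, hR₀conn⟩ :=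
    hSconn.exists_subset_ncard_lt (hfin.subset hSR) hSnt.nonempty
  have hSn : S.ncard ≤ n := hlab ▸ Set.ncard_le_ncard hSR hfin
  refine ⟨R₀, hR₀R.ssubset_of_ne ?_, fun ⟨T, hT⟩ => T.not_tripConnected hT hSnt hR₀conn⟩
  rintro rfl
  omega

/-- for n ≥ 3, any incompatible set of more than n-1 rooted triplets over
n labels has an incompatible proper subset. -/
theorem incompatible_triplets_upper_bound (n : ℕ) (hn : 3 ≤ n)
    (R : Set (Sym2 ℕ × ℕ)) (hfin : R.Finite) (hR : ∀ t ∈ R, IsTriplet t)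
    (hlab : (tLabelSet R).ncard = n)
    (hinc : ¬ RCompat (tLabelSet R) R)
    (hcard : n - 1 < R.ncard) :
    ∃ R', R' ⊂ R ∧ ¬ RCompat (tLabelSet R') R' :=
  incompatible_triplets_upper_bound_general n hn R hR hlab hinc hcard
end
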